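/- Otter's dissimilarity characteristic for trees: for any tree T, the number of dissimilarity classes of vertices minus the number of dissimilarity classes of edges that are not symmetric equals 1, where an edge is symmetric if some automorphism of T swaps its endpoints. -/

import Mathlib

/-- The collection of similarity (dissimilarity) classes of vertices of `G`:
the orbits of the automorphism group acting on vertices. -/
def vertexOrbits {V : Type*} (G : SimpleGraph V) : Set (Set V) :=
  Set.range fun v : V => {w : V | ∃ φ : G ≃g G, φ v = w}

/-- An edge `e` of `G` is symmetric if some automorphism swaps its endpoints. -/
def IsSymmetricEdge {V : Type*} (G : SimpleGraph V) (e : Sym2 V) : Prop :=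
  ∃ (φ : G ≃g G) (u v : V), e = s(u, v) ∧ φ u = v ∧ φ v = u

/-- The collection of similarity classes of non-symmetric edges of `G`:
the orbits of the automorphism group on edges that are not symmetric. -/
def nonSymmetricEdgeOrbits {V : Type*} (G : SimpleGraph V) : Set (Set (Sym2 V)) :=
  (fun e : Sym2 V => {e' : Sym2 V | ∃ φ : G ≃g G, Sym2.map (⇑φ) e = e'}) ''
    {e ∈ G.edgeSet | ¬ IsSymmetricEdge G e}

/-! Automorphisms preserve eccentricity, hence the center, and the center of a finite tree is
a vertex or an edge. A non-central vertex `v` has exactly one neighbour of eccentricity at most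
its own, its parent, which has smaller eccentricity. So `v ↦ s(parent v, v)` is an equivariant
bijection from the non-central vertices onto the edges not inside the center, none of which is
symmetric: it matches the orbits of non-central vertices with those edge orbits. What is left
is the center: a single vertex and no edge, or an edge whose two endpoints form one orbit
exactly when the edge is symmetric. -/

namespace SimpleGraph

variable {V W : Type*} {G : SimpleGraph V} {H : SimpleGraph W}

theorem Hom.edist_map_le (f : G →g H) (u v : V) : H.edist (f u) (f v) ≤ G.edist u v :=
  le_iInf fun p => by simpa using edist_le (p.map f)

theorem Iso.edist_map (φ : G ≃g H) (u v : V) : H.edist (φ u) (φ v) = G.edist u v :=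
  le_antisymm (Hom.edist_map_le φ.toHom u v) <| by
    simpa using Hom.edist_map_le φ.symm.toHom (φ u) (φ v)

theorem Iso.eccent_map (φ : G ≃g H) (u : V) : H.eccent (φ u) = G.eccent u := by
  simp only [eccent_def]
  rw [← φ.toEquiv.iSup_comp]
  simp [Iso.edist_map]

theorem IsAcyclic.edist_eq_length (hG : G.IsAcyclic) {u v : V} {p : G.Walk u v}
    (hp : p.IsPath) : G.edist u v = p.length := by
  obtain ⟨q, hq, hqd⟩ := p.reachable.exists_path_of_dist
  obtain rfl : q = p := congrArg Subtype.val ((hG.subsingleton_path u v).elim ⟨q, hq⟩ ⟨p, hp⟩)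
  rw [hqd, q.reachable.coe_dist_eq_edist]

end SimpleGraph

namespace SimpleGraph.IsTree

variable {V : Type*} [Finite V] {G : SimpleGraph V}

theorem eq_of_adj_of_eccent_le (hG : G.IsTree) {v u₁ u₂ : V} (h₁ : G.Adj v u₁)
    (h₂ : G.Adj v u₂) (he₁ : G.eccent u₁ ≤ G.eccent v) (he₂ : G.eccent u₂ ≤ G.eccent v) :
    u₁ = u₂ := by
  obtain ⟨w, hw⟩ := G.exists_edist_eq_eccent_of_finite v
  obtain ⟨p, hp, -⟩ := hG.existsUnique_path v w
  -- a neighbour off the path to a farthest vertex `w` is farther from `w` than `v` is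
  have snd_eq : ∀ u, G.Adj v u → G.eccent u ≤ G.eccent v → u = p.snd := by
    refine fun u hu he => hG.isAcyclic.eq_snd_of_adj_start hp hu (by_contra fun hnot => ?_)
    have hfar : G.edist u w ≤ G.edist v w := hw ▸ G.edist_le_eccent.trans he
    rw [hG.isAcyclic.edist_eq_length (hp.cons hnot (h := hu.symm)),
      hG.isAcyclic.edist_eq_length hp, Walk.length_cons] at hfar
    exact absurd hfar (by norm_cast; omega)
  exact (snd_eq u₁ h₁ he₁).trans (snd_eq u₂ h₂ he₂).symm

theorem eccent_lt_of_isPath (hG : G.IsTree) {a b c : V} {p : G.Walk b c} (hp : p.IsPath)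
    (hab : G.Adj a b) (ha : a ∉ p.support) (he : G.eccent a ≤ G.eccent b) (hbc : b ≠ c) :
    G.eccent b < G.eccent c := by
  induction p generalizing a with
  | nil => exact absurd rfl hbc
  | @cons b x c hbx q ih =>
    have hxa : x ≠ a := fun h => ha (h ▸ by simp)
    have hlt : G.eccent b < G.eccent x :=
      lt_of_not_ge fun hle => hxa (hG.eq_of_adj_of_eccent_le hbx hab.symm hle he)
    obtain rfl | hxc := eq_or_ne x c
    · exact hlt
    · exact hlt.trans (ih hp.of_cons hbx ((Walk.cons_isPath_iff _ _).mp hp).2 hlt.le hxc)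

theorem exists_adj_eccent_lt (hG : G.IsTree) {v : V} (hv : v ∉ G.center) :
    ∃ u, G.Adj v u ∧ G.eccent u < G.eccent v := by
  have : Nonempty V := ⟨v⟩
  obtain ⟨c, hc⟩ := G.exists_eccent_eq_radius
  have hlt : G.eccent c < G.eccent v := hc ▸ lt_of_le_of_ne radius_le_eccent (Ne.symm hv)
  obtain ⟨p, hp, -⟩ := hG.existsUnique_path v c
  obtain ⟨x, hvx, q, rfl⟩ := Walk.exists_eq_cons_of_ne (by rintro rfl; exact hlt.false) p
  refine ⟨x, hvx, lt_of_not_ge fun hle => ?_⟩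
  have hxc : G.eccent x ≤ G.eccent c := by
    obtain rfl | hne := eq_or_ne x c
    · exact le_rfl
    · exact (hG.eccent_lt_of_isPath hp.of_cons hvx ((Walk.cons_isPath_iff _ _).mp hp).2 hle hne).le
  exact (hle.trans hxc).not_gt hlt

theorem adj_of_mem_center (hG : G.IsTree) {c₁ c₂ : V} (h₁ : c₁ ∈ G.center) (h₂ : c₂ ∈ G.center)
    (hne : c₁ ≠ c₂) : G.Adj c₁ c₂ := by
  obtain ⟨p, hp, -⟩ := hG.existsUnique_path c₁ c₂
  obtain ⟨x, hx, q, rfl⟩ := Walk.exists_eq_cons_of_ne hne p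
  obtain rfl | hxc := eq_or_ne x c₂
  · exact hx
  have hle : G.eccent c₁ ≤ G.eccent x := h₁ ▸ radius_le_eccent
  have hlt := hG.eccent_lt_of_isPath hp.of_cons hx ((Walk.cons_isPath_iff _ _).mp hp).2 hle hxc
  exact absurd (h₂ ▸ hlt) radius_le_eccent.not_gt

theorem center_eq_singleton_or_pair (hG : G.IsTree) :
    (∃ c, G.center = {c}) ∨ ∃ c₁ c₂, G.Adj c₁ c₂ ∧ G.center = {c₁, c₂} := by
  have : Nonempty V := hG.connected.nonempty
  obtain ⟨c₁, h₁⟩ := G.center_nonempty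
  by_cases hsing : ∀ c ∈ G.center, c = c₁
  · exact .inl ⟨c₁, Set.eq_singleton_iff_unique_mem.mpr ⟨h₁, hsing⟩⟩
  push Not at hsing
  obtain ⟨c₂, h₂, hne⟩ := hsing
  refine .inr ⟨c₁, c₂, hG.adj_of_mem_center h₁ h₂ hne.symm, Set.ext fun c => ⟨fun hc => ?_, ?_⟩⟩
  · by_contra! hc'
    simp only [Set.mem_insert_iff, Set.mem_singleton_iff, not_or] at hc'
    -- a third central vertex would have two neighbours of its own eccentricity
    have hadj₁ := hG.adj_of_mem_center hc h₁ hc'.1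
    have hadj₂ := hG.adj_of_mem_center hc h₂ hc'.2
    exact hne (hG.eq_of_adj_of_eccent_le hadj₁ hadj₂ (h₁.trans hc.symm).le
      (h₂.trans hc.symm).le).symm
  · rintro (rfl | rfl) <;> assumption

end SimpleGraph.IsTree

instance Sym2.instMulAction {M α : Type*} [Monoid M] [MulAction M α] : MulAction M (Sym2 α) where
  smul m := Sym2.map (m • ·)
  one_smul e := by
    change Sym2.map (fun a => (1 : M) • a) e = e
    simp
  mul_smul m n e := by
    change Sym2.map (fun a => (m * n) • a) e = Sym2.map (m • ·) (Sym2.map (n • ·) e)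
    simp [Sym2.map_map, mul_smul]

namespace MulAction

variable {M α β : Type*} [Group M] [MulAction M α] [MulAction M β]

theorem ncard_image_orbit_union [Finite α] {s t : Set α} (hs : ∀ g : M, ∀ x ∈ s, g • x ∈ s)
    (hst : Disjoint s t) :
    (orbit M '' (s ∪ t)).ncard = (orbit M '' s).ncard + (orbit M '' t).ncard := by
  refine Set.image_union .. ▸ Set.ncard_union_eq (Set.disjoint_left.mpr ?_)
  rintro _ ⟨x, hx, rfl⟩ ⟨y, hy, hxy⟩
  obtain ⟨g, rfl⟩ := mem_orbit_iff.mp (orbit_eq_iff.mp hxy)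
  exact hst.notMem_of_mem_left (hs g x hx) hy

theorem image_orbit_of_smul_comm {f : α → β} {x : α} (hf : ∀ g : M, f (g • x) = g • f x) :
    f '' orbit M x = orbit M (f x) := by
  simp only [orbit, ← Set.range_comp, Function.comp_def, hf]

theorem ncard_image_orbit_image {f : α → β} {s : Set α} (hs : ∀ g : M, ∀ x ∈ s, g • x ∈ s)
    (hf : ∀ g : M, ∀ x ∈ s, f (g • x) = g • f x) (hinj : s.InjOn f) :
    (orbit M '' (f '' s)).ncard = (orbit M '' s).ncard := by
  have hsub : orbit M '' s ⊆ s.powerset := by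
    rintro _ ⟨x, hx, rfl⟩ _ ⟨g, rfl⟩
    exact hs g x hx
  rw [← (hinj.image.mono hsub).ncard_image, Set.image_image, Set.image_image]
  exact congrArg Set.ncard (Set.image_congr fun x hx => (image_orbit_of_smul_comm (hf · x hx)).symm)

end MulAction

namespace SimpleGraph

open MulAction

variable {V : Type*} {G : SimpleGraph V}

theorem eccent_smul (φ : G ≃g G) (v : V) : G.eccent (φ • v) = G.eccent v :=
  φ.eccent_map v

theorem smul_mem_center_iff (φ : G ≃g G) {v : V} : φ • v ∈ G.center ↔ v ∈ G.center := by
  rw [mem_center_iff, mem_center_iff, eccent_smul]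

theorem mem_orbit_of_isSymmetricEdge {u v : V} (h : IsSymmetricEdge G s(u, v)) :
    v ∈ orbit (G ≃g G) u := by
  obtain ⟨φ, a, b, he, hab, hba⟩ := h
  rcases Sym2.eq_iff.mp he with ⟨rfl, rfl⟩ | ⟨rfl, rfl⟩
  exacts [⟨φ, hab⟩, ⟨φ, hba⟩]

theorem orbit_eq_orbit_iff_isSymmetricEdge_of_center_eq_pair {c₁ c₂ : V}
    (hc : G.center = {c₁, c₂}) (hne : c₁ ≠ c₂) :
    orbit (G ≃g G) c₁ = orbit (G ≃g G) c₂ ↔ IsSymmetricEdge G s(c₁, c₂) := by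
  refine ⟨fun h => ?_, fun h => (orbit_eq_iff.mpr (mem_orbit_of_isSymmetricEdge h)).symm⟩
  · obtain ⟨φ, hφ⟩ := mem_orbit_iff.mp (orbit_eq_iff.mp h.symm)
    have hφ₂ : φ • c₂ ∈ G.center := (smul_mem_center_iff φ).mpr (hc ▸ by simp)
    rw [hc] at hφ₂
    rcases hφ₂ with hφ₂ | hφ₂
    · exact ⟨φ, c₁, c₂, rfl, hφ, hφ₂⟩
    · exact absurd (MulAction.injective φ (hφ.trans hφ₂.symm)) hne

open Classical in
noncomputable def parent (G : SimpleGraph V) (v : V) : V :=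
  if h : ∃ u, G.Adj v u ∧ G.eccent u < G.eccent v then h.choose else v

noncomputable def parentEdge (G : SimpleGraph V) (v : V) : Sym2 V :=
  s(G.parent v, v)

namespace IsTree

variable [Finite V] {u v : V}

theorem adj_parent (hG : G.IsTree) (hv : v ∉ G.center) :
    G.Adj v (G.parent v) ∧ G.eccent (G.parent v) < G.eccent v := by
  have h := hG.exists_adj_eccent_lt hv
  rw [parent, dif_pos h]
  exact h.choose_spec

theorem eq_parent (hG : G.IsTree) (hv : v ∉ G.center) (h : G.Adj v u)
    (he : G.eccent u ≤ G.eccent v) : u = G.parent v :=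
  hG.eq_of_adj_of_eccent_le h (hG.adj_parent hv).1 he (hG.adj_parent hv).2.le

theorem parent_smul (hG : G.IsTree) (φ : G ≃g G) (hv : v ∉ G.center) :
    G.parent (φ • v) = φ • G.parent v := by
  obtain ⟨hadj, hlt⟩ := hG.adj_parent hv
  refine (hG.eq_parent ((smul_mem_center_iff φ).not.mpr hv) (φ.map_adj_iff.mpr hadj) ?_).symm
  simpa only [RelIso.smul_def, Iso.eccent_map] using hlt.le

theorem parentEdge_smul (hG : G.IsTree) (φ : G ≃g G) (hv : v ∉ G.center) :
    G.parentEdge (φ • v) = φ • G.parentEdge v := by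
  rw [parentEdge, hG.parent_smul φ hv]
  rfl

theorem parentEdge_injOn (hG : G.IsTree) : G.centerᶜ.InjOn G.parentEdge := by
  intro v hv w hw h
  rcases Sym2.eq_iff.mp h with ⟨-, h⟩ | ⟨hvw, hwv⟩
  · exact h
  · have hv' := (hG.adj_parent hv).2
    have hw' := (hG.adj_parent hw).2
    rw [hvw] at hv'
    rw [← hwv] at hw'
    exact absurd (hv'.trans hw') (lt_irrefl _)

theorem parentEdge_mem_edgeSet (hG : G.IsTree) (hv : v ∉ G.center) :
    G.parentEdge v ∈ G.edgeSet :=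
  (hG.adj_parent hv).1.symm

theorem not_isSymmetricEdge_parentEdge (hG : G.IsTree) (hv : v ∉ G.center) :
    ¬ IsSymmetricEdge G (G.parentEdge v) := fun h => by
  obtain ⟨φ, hφ⟩ := mem_orbit_iff.mp (mem_orbit_of_isSymmetricEdge h)
  have heq := eccent_smul φ (G.parent v)
  rw [hφ] at heq
  exact (hG.adj_parent hv).2.ne heq.symm

theorem mem_center_or_mem_parentEdge (hG : G.IsTree) (h : G.Adj u v) :
    (u ∈ G.center ∧ v ∈ G.center) ∨ s(u, v) ∈ G.parentEdge '' G.centerᶜ := by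
  have of_lt : ∀ {a b}, G.Adj a b → G.eccent a < G.eccent b →
      s(a, b) ∈ G.parentEdge '' G.centerᶜ := fun hab hlt => by
    have hb : _ ∉ G.center := (radius_le_eccent.trans_lt hlt).ne'
    exact ⟨_, hb, by rw [parentEdge, ← hG.eq_parent hb hab.symm hlt.le]⟩
  rcases lt_trichotomy (G.eccent u) (G.eccent v) with hlt | heq | hgt
  · exact .inr (of_lt h hlt)
  · by_cases hu : u ∈ G.center
    · exact .inl ⟨hu, heq.symm.trans hu⟩
    · have hlt := (hG.adj_parent hu).2
      rw [← hG.eq_parent hu h heq.ge] at hlt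
      exact absurd heq hlt.ne'
  · exact .inr (Sym2.eq_swap ▸ of_lt h.symm hgt)

theorem sdiff_parentEdge_subset (hG : G.IsTree) {c₁ c₂ : V} (hc : G.center = {c₁, c₂}) :
    {e ∈ G.edgeSet | ¬ IsSymmetricEdge G e} \ G.parentEdge '' G.centerᶜ ⊆ {s(c₁, c₂)} := by
  rintro e ⟨⟨he, -⟩, hP⟩
  induction e using Sym2.ind with | _ u v => ?_
  rcases hG.mem_center_or_mem_parentEdge he with ⟨hu, hv⟩ | h
  · rw [hc] at hu hv
    have := G.ne_of_adj he
    rw [Set.mem_singleton_iff, Sym2.eq_iff]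
    grind
  · exact absurd h hP

theorem ncard_orbit_center (hG : G.IsTree) :
    (orbit (G ≃g G) '' G.center).ncard = (orbit (G ≃g G) ''
      ({e ∈ G.edgeSet | ¬ IsSymmetricEdge G e} \ G.parentEdge '' G.centerᶜ)).ncard + 1 := by
  rcases hG.center_eq_singleton_or_pair with ⟨c, hc⟩ | ⟨c₁, c₂, hadj, hc⟩
  · have hD := hG.sdiff_parentEdge_subset (hc.trans (Set.pair_eq_singleton c).symm)
    rw [Set.subset_singleton_iff_eq, or_iff_left fun h => G.irrefl (h.ge rfl).1.1] at hD
    rw [hD, hc]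
    simp
  · have hD := hG.sdiff_parentEdge_subset hc
    have hcP : s(c₁, c₂) ∉ G.parentEdge '' G.centerᶜ := by
      rintro ⟨v, hv, he⟩
      have hv' : v ∈ s(c₁, c₂) := he ▸ Sym2.mem_mk_right _ _
      exact hv (hc ▸ Sym2.mem_iff.mp hv')
    have hsym := orbit_eq_orbit_iff_isSymmetricEdge_of_center_eq_pair hc hadj.ne
    by_cases hsymm : IsSymmetricEdge G s(c₁, c₂)
    · rw [Set.subset_singleton_iff_eq, or_iff_left fun h => (h.ge rfl).1.2 hsymm] at hD
      rw [hD, hc, Set.image_pair, hsym.mpr hsymm]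
      simp
    · rw [Set.subset_singleton_iff_eq, or_iff_right fun h => h.le ⟨⟨hadj, hsymm⟩, hcP⟩] at hD
      rw [hD, hc, Set.image_pair, Set.image_singleton, Set.ncard_pair (mt hsym.mp hsymm),
        Set.ncard_singleton]

end IsTree

end SimpleGraph

theorem vertexOrbits_eq_range_orbit {V : Type*} (G : SimpleGraph V) :
    vertexOrbits G = Set.range (MulAction.orbit (G ≃g G)) :=
  rfl

theorem nonSymmetricEdgeOrbits_eq_image_orbit {V : Type*} (G : SimpleGraph V) :
    nonSymmetricEdgeOrbits G =
      MulAction.orbit (G ≃g G) '' {e ∈ G.edgeSet | ¬ IsSymmetricEdge G e} :=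
  rfl

/-- Otter's dissimilarity characteristic: in any tree, the number of
dissimilarity classes of vertices exceeds the number of dissimilarity classes
of non-symmetric edges by exactly one. -/
theorem otter_dissimilarity {V : Type*} [Fintype V] (G : SimpleGraph V)
    (hG : G.IsTree) :
    (vertexOrbits G).ncard = (nonSymmetricEdgeOrbits G).ncard + 1 := by
  have hC := hG.ncard_orbit_center
  set N := {e ∈ G.edgeSet | ¬ IsSymmetricEdge G e}
  set P := G.parentEdge '' G.centerᶜ
  have hPN : P ⊆ N := by
    rintro _ ⟨v, hv, rfl⟩
    exact ⟨hG.parentEdge_mem_edgeSet hv, hG.not_isSymmetricEdge_parentEdge hv⟩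
  have hcenter : ∀ φ : G ≃g G, ∀ v ∈ G.center, φ • v ∈ G.center :=
    fun φ _ => (SimpleGraph.smul_mem_center_iff φ).mpr
  have hcompl : ∀ φ : G ≃g G, ∀ v ∈ G.centerᶜ, φ • v ∈ G.centerᶜ :=
    fun φ _ => (SimpleGraph.smul_mem_center_iff φ).not.mpr
  have hequiv : ∀ φ : G ≃g G, ∀ v ∈ G.centerᶜ, G.parentEdge (φ • v) = φ • G.parentEdge v :=
    fun φ _ => hG.parentEdge_smul φ
  have hP : ∀ φ : G ≃g G, ∀ e ∈ P, φ • e ∈ P := by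
    rintro φ _ ⟨v, hv, rfl⟩
    exact ⟨φ • v, hcompl φ v hv, hequiv φ v hv⟩
  have hV : (vertexOrbits G).ncard = (MulAction.orbit (G ≃g G) '' G.center).ncard +
      (MulAction.orbit (G ≃g G) '' G.centerᶜ).ncard := by
    rw [vertexOrbits_eq_range_orbit, ← Set.image_univ, ← Set.union_compl_self G.center,
      MulAction.ncard_image_orbit_union hcenter disjoint_compl_right]
  have hE : (nonSymmetricEdgeOrbits G).ncard = (MulAction.orbit (G ≃g G) '' P).ncard +
      (MulAction.orbit (G ≃g G) '' (N \ P)).ncard := by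
    rw [nonSymmetricEdgeOrbits_eq_image_orbit,
      ← MulAction.ncard_image_orbit_union hP Set.disjoint_sdiff_right, Set.union_sdiff_cancel hPN]
  rw [hV, hE, MulAction.ncard_image_orbit_image hcompl hequiv hG.parentEdge_injOn, hC]
  omega
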